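/- Let a be a real number with 0 ≤ a ≤ 1/2, and define g_a(x) = (x + x³ + a·x·√(1 + x²))/((1 + x²)(1 + a·√(1 + x²))) − arctan x for x > 0. Then g_a is increasing on (0, ∞), and consequently g_a(x) > 0 for all x > 0. -/

import Mathlib

/-! With `s = √(1 + x²)`, a direct computation gives
`g_a'(x) = x² ((1 - 2a²) s - a) / (s³ (1 + a s)²)`, which is positive for `x > 0` because `s > 1`
and `1 - 2a² ≥ a` when `0 ≤ a ≤ 1/2`. Hence `g_a` is strictly increasing on `[0, ∞)`, and
`g_a(0) = 0` gives positivity. -/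

open Real Set

noncomputable def shaferG (a x : ℝ) : ℝ :=
  (x + x ^ 3 + a * x * √(1 + x ^ 2)) / ((1 + x ^ 2) * (1 + a * √(1 + x ^ 2))) - arctan x

lemma hasDerivAt_sqrt_one_add_sq (x : ℝ) :
    HasDerivAt (fun x : ℝ => √(1 + x ^ 2)) (x / √(1 + x ^ 2)) x := by
  have hpos : (0 : ℝ) < 1 + x ^ 2 := by positivity
  have hinner : HasDerivAt (fun x : ℝ => 1 + x ^ 2) (2 * x) x := by
    simpa using (hasDerivAt_pow 2 x).const_add 1
  refine (hinner.sqrt hpos.ne').congr_deriv ?_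
  field_simp

lemma hasDerivAt_shaferG {a : ℝ} (ha : 0 ≤ a) (x : ℝ) :
    HasDerivAt (shaferG a)
      (x ^ 2 * ((1 - 2 * a ^ 2) * √(1 + x ^ 2) - a) /
        (√(1 + x ^ 2) ^ 3 * (1 + a * √(1 + x ^ 2)) ^ 2)) x := by
  have hsqrt := hasDerivAt_sqrt_one_add_sq x
  have hnum := ((hasDerivAt_id' x).add (hasDerivAt_pow 3 x)).add
    (((hasDerivAt_id' x).const_mul a).mul hsqrt)
  have hden := ((hasDerivAt_pow 2 x).const_add 1).mul ((hsqrt.const_mul a).const_add 1)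
  set s := √(1 + x ^ 2)
  have hs2 : s ^ 2 = 1 + x ^ 2 := sq_sqrt (by positivity)
  have hs : 0 < s := by positivity
  have hden0 : (1 + x ^ 2) * (1 + a * s) ≠ 0 := by positivity
  refine ((hnum.div hden hden0).sub (hasDerivAt_arctan x)).congr_deriv ?_
  have hx2 : x ^ 2 = s ^ 2 - 1 := by linarith
  norm_num
  rw [show √(1 + x ^ 2) = s from rfl]
  field_simp
  rw [hx2]
  ring

lemma shaferG_zero (a : ℝ) : shaferG a 0 = 0 := by
  simp [shaferG]

lemma deriv_shaferG_pos {a x : ℝ} (ha0 : 0 ≤ a) (ha1 : a ≤ 1 / 2) (hx : 0 < x) :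
    0 < deriv (shaferG a) x := by
  rw [(hasDerivAt_shaferG ha0 x).deriv]
  have hs : 1 < √(1 + x ^ 2) := by
    rw [lt_sqrt zero_le_one]
    nlinarith
  -- `1 - 2a² - a = (1 - 2a)(1 + a)`
  have hnum : 0 < (1 - 2 * a ^ 2) * √(1 + x ^ 2) - a := by
    have hfactor : 0 ≤ (1 - 2 * a) * (1 + a) := by nlinarith
    nlinarith [mul_pos (by nlinarith : (0 : ℝ) < 1 - 2 * a ^ 2) (sub_pos.2 hs)]
  have hden : 0 < √(1 + x ^ 2) ^ 3 * (1 + a * √(1 + x ^ 2)) ^ 2 := by positivity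
  positivity

lemma strictMonoOn_shaferG {a : ℝ} (ha0 : 0 ≤ a) (ha1 : a ≤ 1 / 2) :
    StrictMonoOn (shaferG a) (Ici 0) := by
  apply strictMonoOn_of_deriv_pos (convex_Ici 0)
  · exact fun x _ => (hasDerivAt_shaferG ha0 x).continuousAt.continuousWithinAt
  · intro x hx
    rw [interior_Ici] at hx
    exact deriv_shaferG_pos ha0 ha1 hx

theorem shafer_g_mono_and_pos (a : ℝ) (ha0 : 0 ≤ a) (ha1 : a ≤ 1 / 2) :
    MonotoneOn
      (fun x : ℝ => (x + x ^ 3 + a * x * Real.sqrt (1 + x ^ 2)) /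
        ((1 + x ^ 2) * (1 + a * Real.sqrt (1 + x ^ 2))) - Real.arctan x)
      (Set.Ioi (0 : ℝ)) ∧
    ∀ x : ℝ, 0 < x →
      0 < (x + x ^ 3 + a * x * Real.sqrt (1 + x ^ 2)) /
        ((1 + x ^ 2) * (1 + a * Real.sqrt (1 + x ^ 2))) - Real.arctan x := by
  have hmono := strictMonoOn_shaferG ha0 ha1
  refine ⟨hmono.monotoneOn.mono Ioi_subset_Ici_self, fun x hx => ?_⟩
  have hpos := hmono self_mem_Ici hx.le hx
  rwa [shaferG_zero] at hpos
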